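/- Let H₁ and H₂ be real Hilbert spaces, let A : H₁ → H₂ be a bounded linear operator with adjoint A*, and let γ ≥ 0. Let z, p ∈ H₁, w ∈ H₂, and set y := z + γ • A*(w − A z). Then ‖y − p‖² ≤ ‖z − p‖² − ‖y − z‖² + 2γ · ‖A z − A p‖ · ‖w − A z‖ + 2γ · ‖y − z‖ · ‖A‖ · ‖w − A z‖. -/
import Mathlib

open scoped RealInnerProductSpace

theorem stmt_7
    {H₁ H₂ : Type*}
    [NormedAddCommGroup H₁] [InnerProductSpace ℝ H₁] [CompleteSpace H₁]
    [NormedAddCommGroup H₂] [InnerProductSpace ℝ H₂] [CompleteSpace H₂]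
    (A : H₁ →L[ℝ] H₂) (γ : ℝ) (hγ : 0 ≤ γ)
    (z p : H₁) (w : H₂) (y : H₁)
    (hy : y = z + γ • (ContinuousLinearMap.adjoint A) (w - A z)) :
    ‖y - p‖ ^ 2 ≤ ‖z - p‖ ^ 2 - ‖y - z‖ ^ 2
      + 2 * γ * ‖A z - A p‖ * ‖w - A z‖
      + 2 * γ * ‖y - z‖ * ‖A‖ * ‖w - A z‖ := by
  have key : ‖y - p‖ ^ 2 = ‖z - p‖ ^ 2 - ‖y - z‖ ^ 2 + 2 * ⟪y - z, y - p⟫ := by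
    have h1 : y - p = (y - z) + (z - p) := by abel
    rw [h1, @norm_add_sq_real]
    have h2 : ⟪y - z, y - p⟫ = ‖y - z‖ ^ 2 + ⟪y - z, z - p⟫ := by
      rw [h1, inner_add_right, real_inner_self_eq_norm_sq]
    rw [← h1, h2]; ring
  have hid : ⟪y - z, y - p⟫ = γ * (⟪w - A z, A y - A z⟫ + ⟪w - A z, A z - A p⟫) := by
    have hyz : y - z = γ • (ContinuousLinearMap.adjoint A) (w - A z) := by
      rw [hy]; abel
    rw [hyz, inner_smul_left, ContinuousLinearMap.adjoint_inner_left, ← inner_add_right]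
    have : A (y - p) = (A y - A z) + (A z - A p) := by
      rw [map_sub]; abel
    rw [this]
    simp
  have b1 : ⟪w - A z, A z - A p⟫ ≤ ‖A z - A p‖ * ‖w - A z‖ := by
    calc ⟪w - A z, A z - A p⟫ ≤ ‖w - A z‖ * ‖A z - A p‖ := real_inner_le_norm _ _
    _ = ‖A z - A p‖ * ‖w - A z‖ := by ring
  have b2 : ⟪w - A z, A y - A z⟫ ≤ ‖y - z‖ * ‖A‖ * ‖w - A z‖ := by
    have h3 : A y - A z = A (y - z) := by rw [map_sub]
    calc ⟪w - A z, A y - A z⟫ ≤ ‖w - A z‖ * ‖A y - A z‖ := real_inner_le_norm _ _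
    _ ≤ ‖w - A z‖ * (‖A‖ * ‖y - z‖) := by
        have := A.le_opNorm (y - z)
        rw [h3]
        exact mul_le_mul_of_nonneg_left this (norm_nonneg _)
    _ = ‖y - z‖ * ‖A‖ * ‖w - A z‖ := by ring
  rw [key, hid]
  have := add_le_add b2 b1
  nlinarith [mul_le_mul_of_nonneg_left this hγ]
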